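/- If A^π(s,a) ≥ 0 for all (s,a) and A^π(s*,a*) > 0 for some state-action pair (s*,a*) reachable with positive probability at some time t under a policy π* from ρ0, then η(π*) > η(π). -/

import Mathlib

open scoped BigOperators

/-- A finite, infinite-horizon discounted MDP `(S, A, P, r, ρ0, γ)`. -/
structure MDP (S A : Type) [Fintype S] [Fintype A] where
  P : S → A → S → ℝ
  r : S → ℝ
  ρ0 : S → ℝ
  γ : ℝ
  P_nonneg : ∀ s a s', 0 ≤ P s a s'
  P_sum : ∀ s a, ∑ s', P s a s' = 1
  ρ0_nonneg : ∀ s, 0 ≤ ρ0 s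
  ρ0_sum : ∑ s, ρ0 s = 1
  γ_pos : 0 < γ
  γ_lt_one : γ < 1

variable {S A : Type} [Fintype S] [Fintype A] [DecidableEq S] [DecidableEq A]

/-- A stochastic policy: a probability distribution over actions at each state. -/
def IsPolicy (π : S → A → ℝ) : Prop :=
  (∀ s a, 0 ≤ π s a) ∧ ∀ s, ∑ a, π s a = 1

namespace MDP

/-- Distribution of the state `s_t` when `s_0 ∼ d` and actions are sampled from `π`. -/
def stateDist (M : MDP S A) (π : S → A → ℝ) : ℕ → (S → ℝ) → S → ℝ
  | 0, d => d
  | t + 1, d => fun s' => ∑ s, ∑ a, M.stateDist π t d s * π s a * M.P s a s'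

/-- Dirac distribution concentrated at a state. -/
def dirac (s : S) : S → ℝ := fun x => if x = s then 1 else 0

/-- Value function `V^π(s) = E[∑_t γ^t r(s_t) | s_0 = s]`. -/
noncomputable def V (M : MDP S A) (π : S → A → ℝ) (s : S) : ℝ :=
  ∑' t : ℕ, M.γ ^ t * ∑ s', M.stateDist π t (dirac s) s' * M.r s'

/-- State-action value `Q^π(s,a) = r(s) + γ E_{s'∼P(·|s,a)}[V^π(s')]`. -/
noncomputable def Q (M : MDP S A) (π : S → A → ℝ) (s : S) (a : A) : ℝ :=
  M.r s + M.γ * ∑ s', M.P s a s' * M.V π s'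

/-- Advantage function `A^π(s,a) = Q^π(s,a) − V^π(s)`. -/
noncomputable def Adv (M : MDP S A) (π : S → A → ℝ) (s : S) (a : A) : ℝ :=
  M.Q π s a - M.V π s

/-- Expected discounted return `η(π) = E_{s0∼ρ0}[V^π(s0)]`. -/
noncomputable def η (M : MDP S A) (π : S → A → ℝ) : ℝ :=
  ∑ s, M.ρ0 s * M.V π s

/-- `E_{τ∼π*}[∑_t γ^t A^π(s_t, a_t)]`: expected discounted advantage sum of `π`
along trajectories generated by `π*` from `ρ0`. -/
noncomputable def advSum (M : MDP S A) (π πStar : S → A → ℝ) : ℝ :=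
  ∑' t : ℕ, M.γ ^ t * ∑ s, ∑ a, M.stateDist πStar t M.ρ0 s * πStar s a * M.Adv π s a

end MDP

/-!
By the one-step Bellman relation, the expected advantage of `π` at time `t` under the
state distribution `d_t` of `π*` is `E_{d_t}[r] + γ E_{d_{t+1}}[V^π] - E_{d_t}[V^π]`.
Weighting by `γ^t` and summing, the value terms telescope, which gives the
performance-difference identity `η(π*) - η(π) = ∑_t γ^t E_{s ∼ d_t, a ∼ π*}[A^π(s, a)]`.
Every term of this series is nonnegative, and the one at the reachable pair `(s*, a*)` is
positive.
-/

theorem abs_sum_mul_le_sum_abs_of_mem_stdSimplex {ι : Type*} [Fintype ι] {d : ι → ℝ}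
    (hd : d ∈ stdSimplex ℝ ι) (x : ι → ℝ) : |∑ i, d i * x i| ≤ ∑ i, |x i| := by
  refine (Finset.abs_sum_le_sum_abs _ _).trans (Finset.sum_le_sum fun i _ => ?_)
  rw [abs_mul, abs_of_nonneg (hd.1 i)]
  exact mul_le_of_le_one_left (abs_nonneg _) (mem_Icc_of_mem_stdSimplex hd i).2

theorem Summable.hasSum_succ_sub {G : Type*} [AddCommGroup G] [TopologicalSpace G]
    [IsTopologicalAddGroup G] {f : ℕ → G} (hf : Summable f) :
    HasSum (fun n => f (n + 1) - f n) (-f 0) := by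
  have hshift := (hasSum_nat_add_iff' 1).mpr hf.hasSum
  simpa using hshift.sub hf.hasSum

namespace MDP

section

omit [DecidableEq S] [DecidableEq A]

theorem ρ0_mem_stdSimplex (M : MDP S A) : M.ρ0 ∈ stdSimplex ℝ S :=
  ⟨M.ρ0_nonneg, M.ρ0_sum⟩

theorem sum_stateDist_succ_mul (M : MDP S A) (π : S → A → ℝ) (d : S → ℝ) (t : ℕ)
    (f : S → ℝ) :
    ∑ s', M.stateDist π (t + 1) d s' * f s'
      = ∑ s, ∑ a, M.stateDist π t d s * π s a * ∑ s', M.P s a s' * f s' := by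
  simp only [stateDist, Finset.sum_mul, Finset.mul_sum]
  rw [Finset.sum_comm]
  refine Finset.sum_congr rfl fun s _ => ?_
  rw [Finset.sum_comm]
  simp only [mul_assoc]

theorem stateDist_mem_stdSimplex (M : MDP S A) {π : S → A → ℝ} (hπ : IsPolicy π)
    {d : S → ℝ} (hd : d ∈ stdSimplex ℝ S) (t : ℕ) : M.stateDist π t d ∈ stdSimplex ℝ S := by
  induction t with
  | zero => exact hd
  | succ t ih =>
    refine ⟨fun s' => Finset.sum_nonneg fun s _ => Finset.sum_nonneg fun a _ =>
      mul_nonneg (mul_nonneg (ih.1 s) (hπ.1 s a)) (M.P_nonneg s a s'), ?_⟩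
    simpa [M.P_sum, ← Finset.mul_sum, hπ.2, ih.2] using
      M.sum_stateDist_succ_mul π d t (fun _ => 1)

theorem summable_discounted_sum_stateDist_mul (M : MDP S A) {π : S → A → ℝ} (hπ : IsPolicy π)
    {d : S → ℝ} (hd : d ∈ stdSimplex ℝ S) (x : S → ℝ) :
    Summable fun t => M.γ ^ t * ∑ s, M.stateDist π t d s * x s := by
  refine Summable.of_norm_bounded
    ((summable_geometric_of_lt_one M.γ_pos.le M.γ_lt_one).mul_right (∑ s, |x s|)) fun t => ?_
  rw [Real.norm_eq_abs, abs_mul, abs_pow, abs_of_pos M.γ_pos]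
  exact mul_le_mul_of_nonneg_left
    (abs_sum_mul_le_sum_abs_of_mem_stdSimplex (M.stateDist_mem_stdSimplex hπ hd t) x)
    (pow_nonneg M.γ_pos.le t)

end

omit [DecidableEq A]

theorem dirac_mem_stdSimplex (s : S) : dirac s ∈ stdSimplex ℝ S :=
  ⟨fun x => by unfold dirac; split_ifs <;> norm_num, by simp [dirac]⟩

theorem stateDist_eq_sum_dirac (M : MDP S A) (π : S → A → ℝ) (d : S → ℝ) (t : ℕ) (s' : S) :
    M.stateDist π t d s' = ∑ s, d s * M.stateDist π t (dirac s) s' := by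
  induction t generalizing s' with
  | zero => simp [stateDist, dirac]
  | succ t ih =>
    simp only [stateDist, ih, Finset.sum_mul, Finset.mul_sum]
    conv_rhs => rw [Finset.sum_comm]
    refine Finset.sum_congr rfl fun s _ => ?_
    rw [Finset.sum_comm]
    simp only [mul_assoc]

theorem hasSum_discounted_reward (M : MDP S A) {π : S → A → ℝ} (hπ : IsPolicy π)
    (d : S → ℝ) :
    HasSum (fun t => M.γ ^ t * ∑ s', M.stateDist π t d s' * M.r s')
      (∑ s, d s * M.V π s) := by
  have hmix : ∀ t, M.γ ^ t * ∑ s', M.stateDist π t d s' * M.r s'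
      = ∑ s, d s * (M.γ ^ t * ∑ s', M.stateDist π t (dirac s) s' * M.r s') := by
    intro t
    simp only [M.stateDist_eq_sum_dirac π d t, Finset.sum_mul, Finset.mul_sum]
    rw [Finset.sum_comm]
    exact Finset.sum_congr rfl fun _ _ => Finset.sum_congr rfl fun _ _ => by ring
  simp only [hmix]
  exact hasSum_sum fun s _ =>
    (M.summable_discounted_sum_stateDist_mul hπ (dirac_mem_stdSimplex s) M.r).hasSum.mul_left (d s)

theorem sum_stateDist_mul_policy_mul_adv (M : MDP S A) (π : S → A → ℝ) {π' : S → A → ℝ}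
    (hπ' : IsPolicy π') (d : S → ℝ) (t : ℕ) :
    ∑ s, ∑ a, M.stateDist π' t d s * π' s a * M.Adv π s a
      = ∑ s, M.stateDist π' t d s * M.r s
        + M.γ * ∑ s, M.stateDist π' (t + 1) d s * M.V π s
        - ∑ s, M.stateDist π' t d s * M.V π s := by
  have hlocal : ∀ s, ∑ a, M.stateDist π' t d s * π' s a * (M.r s - M.V π s)
      = M.stateDist π' t d s * (M.r s - M.V π s) := fun s => by
    rw [← Finset.sum_mul, ← Finset.mul_sum, hπ'.2 s, mul_one]
  have hsplit : ∀ s a, M.stateDist π' t d s * π' s a * M.Adv π s a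
      = M.stateDist π' t d s * π' s a * (M.r s - M.V π s)
        + M.γ * (M.stateDist π' t d s * π' s a * ∑ s', M.P s a s' * M.V π s') := fun s a => by
    simp only [Adv, Q]
    ring
  simp only [hsplit, Finset.sum_add_distrib, hlocal, ← Finset.mul_sum]
  simp only [M.sum_stateDist_succ_mul, mul_sub, Finset.sum_sub_distrib]
  ring

theorem hasSum_discounted_advantage (M : MDP S A) (π : S → A → ℝ) {π' : S → A → ℝ}
    (hπ' : IsPolicy π') :
    HasSum (fun t => M.γ ^ t * ∑ s, ∑ a, M.stateDist π' t M.ρ0 s * π' s a * M.Adv π s a)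
      (M.η π' - M.η π) := by
  set u : ℕ → ℝ := fun t => M.γ ^ t * ∑ s, M.stateDist π' t M.ρ0 s * M.V π s
  have hterm : ∀ t, M.γ ^ t * ∑ s, ∑ a, M.stateDist π' t M.ρ0 s * π' s a * M.Adv π s a
      = M.γ ^ t * ∑ s, M.stateDist π' t M.ρ0 s * M.r s + (u (t + 1) - u t) := fun t => by
    simp only [M.sum_stateDist_mul_policy_mul_adv π hπ' M.ρ0 t, u, pow_succ]
    ring
  have htelescope : HasSum (fun t => u (t + 1) - u t) (-M.η π) := by
    simpa [u, η, stateDist] using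
      (M.summable_discounted_sum_stateDist_mul hπ' M.ρ0_mem_stdSimplex (M.V π)).hasSum_succ_sub
  convert (M.hasSum_discounted_reward hπ' M.ρ0).add htelescope using 1
  · exact funext hterm
  · exact sub_eq_add_neg _ _

end MDP

theorem strict_improvement_general (M : MDP S A) (π πStar : S → A → ℝ)
    (hπStar : IsPolicy πStar)
    (hA : ∀ s a, 0 ≤ M.Adv π s a)
    (sStar : S) (aStar : A) (t : ℕ)
    (hreach : 0 < M.stateDist πStar t M.ρ0 sStar * πStar sStar aStar)
    (hpos : 0 < M.Adv π sStar aStar) :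
    M.η π < M.η πStar := by
  have hweighted : ∀ u s a, 0 ≤ M.stateDist πStar u M.ρ0 s * πStar s a * M.Adv π s a :=
    fun u s a => mul_nonneg (mul_nonneg
      ((M.stateDist_mem_stdSimplex hπStar M.ρ0_mem_stdSimplex u).1 s) (hπStar.1 s a)) (hA s a)
  have hterm_nonneg : ∀ u, 0 ≤ M.γ ^ u * ∑ s, ∑ a,
      M.stateDist πStar u M.ρ0 s * πStar s a * M.Adv π s a := fun u =>
    mul_nonneg (pow_nonneg M.γ_pos.le u)
      (Finset.sum_nonneg fun s _ => Finset.sum_nonneg fun a _ => hweighted u s a)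
  have hterm_pos : 0 < M.γ ^ t * ∑ s, ∑ a,
      M.stateDist πStar t M.ρ0 s * πStar s a * M.Adv π s a :=
    mul_pos (pow_pos M.γ_pos t) <|
      Finset.sum_pos' (fun s _ => Finset.sum_nonneg fun a _ => hweighted t s a)
        ⟨sStar, Finset.mem_univ _, Finset.sum_pos' (fun a _ => hweighted t sStar a)
          ⟨aStar, Finset.mem_univ _, mul_pos hreach hpos⟩⟩
  have hgap : 0 < M.η πStar - M.η π :=
    hasSum_lt (f := 0) hterm_nonneg hterm_pos hasSum_zero (M.hasSum_discounted_advantage π hπStar)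
  exact sub_pos.mp hgap

/-- If `A^π ≥ 0` everywhere and `A^π(s*,a*) > 0` for some pair reachable with positive
probability at some time `t` under `π*`, then `η(π*) > η(π)`. -/
theorem strict_improvement (M : MDP S A) (π πStar : S → A → ℝ)
    (hπ : IsPolicy π) (hπStar : IsPolicy πStar)
    (hA : ∀ s a, 0 ≤ M.Adv π s a)
    (sStar : S) (aStar : A) (t : ℕ)
    (hreach : 0 < M.stateDist πStar t M.ρ0 sStar * πStar sStar aStar)
    (hpos : 0 < M.Adv π sStar aStar) :
    M.η π < M.η πStar :=
  strict_improvement_general M π πStar hπStar hA sStar aStar t hreach hpos
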